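/- arXiv:1904.11320 — 3 statements merged into one kernel-verified Lean document; each statement's English description precedes it below -/
import Mathlib

section
/- Let V be a real vector space with a quadratic form q and associated symmetric bilinear form B (so B(x, x) = q(x)). Let h1, h2 ∈ V be nonzero vectors such that q is positive definite on the span of {h1, h2}, i.e., q(w) > 0 for every nonzero w in span{h1, h2}. Assume there exists e ∈ V with q(e) < 0 and B(e, h1) = B(e, h2) = 0. Then there exists v ∈ V with q(v) > 0, q(h1)·q(v) − B(h1, v)² < 0, and q(h2)·q(v) − B(h2, v)² < 0. -/
/-!
Choose `w = h₁ ± h₂`, with the sign making `±B(h₁, h₂) ≥ 0`; then `q(w) > 0` and `B(hᵢ, w) ≠ 0`.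
Adding a multiple `t e` of the negative vector changes neither `B(hᵢ, w)` nor
`B(w, e) = 0`, and lowers `q(w + t e) = q(w) + t² q(e)` continuously to any prescribed
value `c ∈ (0, q(w)]`. Taking `c < B(hᵢ, w)² / q(hᵢ)` makes both Gram determinants negative.
-/

namespace LinearMap.BilinForm

variable {V : Type*} [AddCommGroup V] [Module ℝ V] (B : LinearMap.BilinForm ℝ V)

theorem exists_pos_apply_self_add_smul_of_pos (hsymm : ∀ x y : V, B x y = B y x) {h₁ h₂ : V}
    (ha₁ : 0 < B h₁ h₁) (ha₂ : 0 < B h₂ h₂) :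
    ∃ ε : ℝ, 0 < B (h₁ + ε • h₂) (h₁ + ε • h₂) ∧ B h₁ (h₁ + ε • h₂) ≠ 0 ∧
      B h₂ (h₁ + ε • h₂) ≠ 0 := by
  have hB₂₁ := hsymm h₂ h₁
  simp only [map_add, map_smul, LinearMap.add_apply, LinearMap.smul_apply, smul_eq_mul, hB₂₁]
  rcases le_total 0 (B h₁ h₂) with h₁₂ | h₁₂
  · exact ⟨1, by nlinarith, by nlinarith, by nlinarith⟩
  · exact ⟨-1, by nlinarith, by nlinarith, by nlinarith⟩

theorem exists_apply_self_add_smul_eq {w e : V} (hwe : B w e = 0) (hew : B e w = 0)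
    (he : B e e < 0) {c : ℝ} (hc : c ≤ B w w) :
    ∃ t : ℝ, B (w + t • e) (w + t • e) = c := by
  set s := (B w w - c) / -B e e
  have hs : s * B e e = c - B w w := by
    rw [div_mul_eq_mul_div, div_eq_iff (neg_ne_zero.mpr he.ne)]
    ring
  refine ⟨√s, ?_⟩
  have hsq : √s * √s = s := Real.mul_self_sqrt (div_nonneg (by linarith) (by linarith))
  simp only [map_add, map_smul, LinearMap.add_apply, LinearMap.smul_apply, smul_eq_mul, hwe, hew]
  linear_combination (B e e) * hsq + hs

end LinearMap.BilinForm

/-- Coordinate-free content of Case 3 of the proof of Theorem 1.1: if `q` is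
positive definite on `span{h1, h2}` and there is a vector `e` with `q(e) < 0`
orthogonal to both `h1` and `h2`, then there exists `v` with `q(v) > 0` whose
Gram determinants with `h1` and `h2` are both negative. -/
theorem stmt2 {V : Type*} [AddCommGroup V] [Module ℝ V]
    (q : QuadraticForm ℝ V) (B : LinearMap.BilinForm ℝ V)
    (hBsymm : ∀ x y : V, B x y = B y x) (hBq : ∀ x : V, B x x = q x)
    (h1 h2 : V) (hh1 : h1 ≠ 0) (hh2 : h2 ≠ 0)
    (hposdef : ∀ w ∈ Submodule.span ℝ ({h1, h2} : Set V), w ≠ 0 → 0 < q w)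
    (hneg : ∃ e : V, q e < 0 ∧ B e h1 = 0 ∧ B e h2 = 0) :
    ∃ v : V, 0 < q v ∧ q h1 * q v - (B h1 v) ^ 2 < 0 ∧
      q h2 * q v - (B h2 v) ^ 2 < 0 := by
  obtain ⟨e, he, he₁, he₂⟩ := hneg
  simp only [← hBq] at he hposdef ⊢
  have ha₁ := hposdef h1 (Submodule.subset_span (by simp)) hh1
  have ha₂ := hposdef h2 (Submodule.subset_span (by simp)) hh2
  obtain ⟨ε, hw, hb₁, hb₂⟩ := B.exists_pos_apply_self_add_smul_of_pos hBsymm ha₁ ha₂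
  set w := h1 + ε • h2
  have hew : B e w = 0 := by simp [w, he₁, he₂]
  obtain ⟨c, hc, hc_lt⟩ := exists_between <|
    lt_min hw (lt_min (div_pos (sq_pos_of_ne_zero hb₁) ha₁) (div_pos (sq_pos_of_ne_zero hb₂) ha₂))
  simp only [lt_min_iff, lt_div_iff₀ ha₁, lt_div_iff₀ ha₂] at hc_lt
  obtain ⟨t, hv⟩ := B.exists_apply_self_add_smul_eq (hBsymm w e ▸ hew) hew he hc_lt.1.le
  have hBv : ∀ h, B e h = 0 → B h (w + t • e) = B h w := fun h he' => by simp [hBsymm h e, he']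
  refine ⟨w + t • e, ?_, ?_, ?_⟩ <;> simp only [hv, hBv h1 he₁, hBv h2 he₂] <;> linarith
end

section
/- Let n ≥ 4 and let q be a quadratic form on ℝⁿ (the space Fin n → ℝ) of signature (3, n − 3), i.e., there is a basis e : Fin n → ℝⁿ with B(e i, e j) = 0 for i ≠ j, q(e i) > 0 for exactly three indices i and q(e i) < 0 for the remaining indices, where B is the symmetric bilinear form associated with q (B(x, x) = q(x)). Let h1, h2 ∈ ℤⁿ be nonzero integral vectors such that q is positive definite on the span of {h1, h2} in ℝⁿ (q(w) > 0 for every nonzero w in that span). Then there exists a nonzero integral vector h3 ∈ ℤⁿ with q(h3) > 0, q(h1)·q(h3) − B(h1, h3)² < 0, and q(h2)·q(h3) − B(h2, h3)² < 0. -/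
/-!
Write `G(h, x) = B(h, h) B(x, x) - B(h, x)²`. Pick a negative vector `N` with `B(h₂, N) ≠ 0`.
The plane through `h₁` and `N` is indefinite, so it has two independent isotropic lines; on
them `B(h₁, ·)` does not vanish, and `B(h₂, ·)` cannot vanish on both. At an isotropic `x`
with `B(h₁, x), B(h₂, x) ≠ 0` both Gram determinants equal `-B(hᵢ, x)² < 0`, and pushing `x`
slightly towards `h₁` makes it positive. The resulting open cone then contains an integral
point: a vector is rounded after being scaled so far out that the cone is wider than `1/2`.
-/

open Topology

namespace LinearMap.BilinForm

variable {E : Type*} [AddCommGroup E] [Module ℝ E] {B : LinearMap.BilinForm ℝ E}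

def gramDet (B : LinearMap.BilinForm ℝ E) (x y : E) : ℝ := B x x * B y y - B x y ^ 2

lemma gramDet_smul_right (B : LinearMap.BilinForm ℝ E) (x y : E) (c : ℝ) :
    B.gramDet x (c • y) = c ^ 2 * B.gramDet x y := by
  simp only [gramDet, map_smul, LinearMap.smul_apply, smul_eq_mul]
  ring

lemma apply_add_smul_self (hB : B.IsSymm) (x y : E) (t : ℝ) :
    B (x + t • y) (x + t • y) = B x x + 2 * t * B y x + t ^ 2 * B y y := by
  simp only [map_add, map_smul, LinearMap.add_apply, LinearMap.smul_apply, smul_eq_mul,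
    hB.eq x y]
  ring

lemma exists_neg_apply_ne_zero (hB : B.IsSymm) {h N : E} (hh : B h h ≠ 0) (hN : B N N < 0) :
    ∃ N', B N' N' < 0 ∧ B h N' ≠ 0 := by
  obtain hhN | hhN := ne_or_eq (B h N) 0
  · exact ⟨N, hN, hhN⟩
  have hsmall : ∀ᶠ ε in 𝓝 (0 : ℝ), B N N + ε ^ 2 * B h h < 0 :=
    (by fun_prop : Continuous fun ε : ℝ => B N N + ε ^ 2 * B h h).tendsto' 0 _
      (by simp) |>.eventually_lt_const hN
  obtain ⟨ε, hεN, hε⟩ :=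
    ((hsmall.filter_mono (nhdsWithin_le_nhds (s := {0}ᶜ))).and self_mem_nhdsWithin).exists
  refine ⟨N + ε • h, ?_, ?_⟩
  · rwa [apply_add_smul_self hB, hhN, mul_zero, add_zero]
  · simpa [hhN] using mul_ne_zero hε hh

lemma exists_isotropic_apply_ne_zero (hB : B.IsSymm) {h₁ h₂ N : E} (h₁pos : 0 < B h₁ h₁)
    (hN : B N N < 0) (h₂N : B h₂ N ≠ 0) : ∃ x, B x x = 0 ∧ B h₁ x ≠ 0 ∧ B h₂ x ≠ 0 := by
  have hdisc : 0 < B h₁ N ^ 2 - B h₁ h₁ * B N N := by nlinarith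
  obtain ⟨d, hd, hd2⟩ : ∃ d, 0 < d ∧ d ^ 2 = B h₁ N ^ 2 - B h₁ h₁ * B N N :=
    ⟨_, Real.sqrt_pos.2 hdisc, Real.sq_sqrt hdisc.le⟩
  -- `N + r • h₁` is isotropic exactly for the roots `r = (σ - B h₁ N) / B(h₁, h₁)`, `σ = ± d`
  let x : ℝ → E := fun σ => N + ((σ - B h₁ N) / B h₁ h₁) • h₁
  have hx : ∀ σ, σ ^ 2 = d ^ 2 → B (x σ) (x σ) = 0 ∧ B h₁ (x σ) = σ := by
    intro σ hσ
    constructor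
    · rw [apply_add_smul_self hB]
      field_simp
      linear_combination hσ.trans hd2
    · simp only [x, map_add, map_smul, smul_eq_mul]
      field_simp
      ring
  have hx₂ : ∀ σ, B h₂ (x σ) = B h₂ N + (σ - B h₁ N) / B h₁ h₁ * B h₂ h₁ := by
    simp [x]
  obtain ⟨σ, hσ, hσ₂⟩ : ∃ σ, σ ^ 2 = d ^ 2 ∧ B h₂ (x σ) ≠ 0 := by
    by_contra! hcon
    have hplus := hcon d rfl
    have hminus := hcon (-d) (neg_sq d)
    rw [hx₂] at hplus hminus
    have h₂₁ : B h₂ h₁ = 0 := by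
      have : 2 * d / B h₁ h₁ * B h₂ h₁ = 0 := by linear_combination hplus - hminus
      simpa [hd.ne', h₁pos.ne'] using this
    exact h₂N (by simpa [h₂₁] using hplus)
  obtain ⟨hxx, hx₁⟩ := hx σ hσ
  refine ⟨x σ, hxx, ?_, hσ₂⟩
  rw [hx₁]
  rintro rfl
  nlinarith

lemma exists_pos_gramDet_neg_of_isotropic (hB : B.IsSymm) {h₁ h₂ x : E} (h₁nonneg : 0 ≤ B h₁ h₁)
    (hx : B x x = 0) (h₁x : B h₁ x ≠ 0) (h₂x : B h₂ x ≠ 0) :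
    ∃ y, 0 < B y y ∧ B.gramDet h₁ y < 0 ∧ B.gramDet h₂ y < 0 := by
  let y : ℝ → E := fun δ => x + (δ * B h₁ x) • h₁
  have hpos : ∀ δ > 0, 0 < B (y δ) (y δ) := by
    intro δ hδ
    have : B (y δ) (y δ) = δ * B h₁ x ^ 2 * (2 + δ * B h₁ h₁) := by
      rw [apply_add_smul_self hB, hx]
      ring
    rw [this]
    positivity
  have hneg : ∀ h, B h x ≠ 0 → ∀ᶠ δ in 𝓝 (0 : ℝ), B.gramDet h (y δ) < 0 := by
    intro h hhx
    have hcont : Continuous fun δ => B.gramDet h (y δ) := by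
      simp only [y, gramDet, map_add, map_smul, LinearMap.add_apply, LinearMap.smul_apply,
        smul_eq_mul]
      fun_prop
    refine hcont.tendsto 0 |>.eventually_lt_const ?_
    simpa [y, gramDet, hx] using sq_pos_of_ne_zero hhx
  have hnear : ∀ᶠ δ in 𝓝[>] (0 : ℝ),
      0 < δ ∧ B.gramDet h₁ (y δ) < 0 ∧ B.gramDet h₂ (y δ) < 0 :=
    Filter.Eventually.and self_mem_nhdsWithin
      (((hneg h₁ h₁x).and (hneg h₂ h₂x)).filter_mono nhdsWithin_le_nhds)
  obtain ⟨δ, hδ, h₁δ, h₂δ⟩ := hnear.exists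
  exact ⟨y δ, hpos δ hδ, h₁δ, h₂δ⟩

theorem exists_pos_gramDet_neg (hB : B.IsSymm) {h₁ h₂ N : E} (h₁pos : 0 < B h₁ h₁)
    (h₂ne : B h₂ h₂ ≠ 0) (hN : B N N < 0) :
    ∃ y, 0 < B y y ∧ B.gramDet h₁ y < 0 ∧ B.gramDet h₂ y < 0 := by
  obtain ⟨N', hN', h₂N'⟩ := exists_neg_apply_ne_zero hB h₂ne hN
  obtain ⟨x, hx, h₁x, h₂x⟩ := exists_isotropic_apply_ne_zero hB h₁pos hN' h₂N'
  exact exists_pos_gramDet_neg_of_isotropic hB h₁pos.le hx h₁x h₂x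

end LinearMap.BilinForm

theorem exists_intCast_mem_of_isOpen_of_smul_mem {ι : Type*} [Fintype ι] {U : Set (ι → ℝ)}
    (hU : IsOpen U) (hsmul : ∀ c : ℝ, 0 < c → ∀ x ∈ U, c • x ∈ U) (hne : U.Nonempty) :
    ∃ z : ι → ℤ, (fun i => (z i : ℝ)) ∈ U := by
  obtain ⟨x, hx⟩ := hne
  obtain ⟨δ, hδ, hball⟩ := Metric.isOpen_iff.1 hU x hx
  -- `δ • round (δ⁻¹ • x)` lies within `δ / 2` of `x`
  let z : ι → ℤ := fun i => round (x i / δ)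
  refine ⟨z, ?_⟩
  have hz : δ • (fun i => (z i : ℝ)) ∈ U := by
    refine hball ((dist_pi_lt_iff hδ).2 fun i => ?_)
    have hround := abs_sub_round (x i / δ)
    rw [Real.dist_eq, Pi.smul_apply, smul_eq_mul, ← abs_neg]
    calc |-(δ * z i - x i)| = δ * |x i / δ - z i| := by
          rw [← abs_of_pos hδ, ← abs_mul, abs_of_pos hδ]
          congr 1
          field_simp
          ring
      _ < δ := by nlinarith
  simpa [smul_smul, hδ.ne'] using hsmul δ⁻¹ (inv_pos.2 hδ) _ hz

theorem exists_intCast_pos_gramDet_neg {ι : Type*} [Fintype ι]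
    {B : LinearMap.BilinForm ℝ (ι → ℝ)} {h₁ h₂ : ι → ℝ}
    (hy : ∃ y, 0 < B y y ∧ B.gramDet h₁ y < 0 ∧ B.gramDet h₂ y < 0) :
    ∃ z : ι → ℤ, 0 < B (fun i => (z i : ℝ)) (fun i => (z i : ℝ)) ∧
      B.gramDet h₁ (fun i => (z i : ℝ)) < 0 ∧ B.gramDet h₂ (fun i => (z i : ℝ)) < 0 := by
  refine exists_intCast_mem_of_isOpen_of_smul_mem
    (U := {y | 0 < B y y ∧ B.gramDet h₁ y < 0 ∧ B.gramDet h₂ y < 0}) ?_ ?_ hy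
  · simp only [Set.ofPred_and, LinearMap.BilinForm.gramDet]
    refine (isOpen_lt ?_ ?_).inter ((isOpen_lt ?_ ?_).inter (isOpen_lt ?_ ?_)) <;> fun_prop
  · rintro c hc y ⟨hyy, hy₁, hy₂⟩
    simp only [Set.mem_ofPred_eq, LinearMap.BilinForm.gramDet_smul_right, map_smul,
      LinearMap.smul_apply, smul_eq_mul]
    exact ⟨by positivity, mul_neg_of_pos_of_neg (by positivity) hy₁,
      mul_neg_of_pos_of_neg (by positivity) hy₂⟩

theorem stmt9_general {n : ℕ} (hn : 4 ≤ n)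
    (q : QuadraticForm ℝ (Fin n → ℝ)) (B : LinearMap.BilinForm ℝ (Fin n → ℝ))
    (hBsymm : ∀ x y, B x y = B y x) (hBq : ∀ x, B x x = q x)
    (e : Module.Basis (Fin n) ℝ (Fin n → ℝ))
    (S : Finset (Fin n)) (hScard : S.card = 3)
    (hneg : ∀ i ∉ S, q (e i) < 0)
    (h1 h2 : Fin n → ℤ) (hh1 : h1 ≠ 0) (hh2 : h2 ≠ 0)
    (hposdef : ∀ w ∈ Submodule.span ℝ
      ({fun i => (h1 i : ℝ), fun i => (h2 i : ℝ)} : Set (Fin n → ℝ)),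
      w ≠ 0 → 0 < q w) :
    ∃ h3 : Fin n → ℤ, h3 ≠ 0 ∧ 0 < q (fun i => (h3 i : ℝ)) ∧
      q (fun i => (h1 i : ℝ)) * q (fun i => (h3 i : ℝ)) -
        (B (fun i => (h1 i : ℝ)) (fun i => (h3 i : ℝ))) ^ 2 < 0 ∧
      q (fun i => (h2 i : ℝ)) * q (fun i => (h3 i : ℝ)) -
        (B (fun i => (h2 i : ℝ)) (fun i => (h3 i : ℝ))) ^ 2 < 0 := by
  have hcast : ∀ h : Fin n → ℤ, h ≠ 0 → (fun i => (h i : ℝ)) ≠ 0 :=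
    fun h hh h0 => hh (funext fun i => by simpa using congrFun h0 i)
  have hq₁ : 0 < B (fun i => (h1 i : ℝ)) (fun i => (h1 i : ℝ)) := hBq _ ▸
    hposdef _ (Submodule.subset_span (Set.mem_insert _ _)) (hcast h1 hh1)
  have hq₂ : 0 < B (fun i => (h2 i : ℝ)) (fun i => (h2 i : ℝ)) := hBq _ ▸
    hposdef _ (Submodule.subset_span (Set.mem_insert_of_mem _ rfl)) (hcast h2 hh2)
  obtain ⟨i, -, hi⟩ := Finset.exists_mem_notMem_of_card_lt_card (s := S) (t := Finset.univ)
    (by rw [hScard, Finset.card_univ, Fintype.card_fin]; omega)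
  have hqe : B (e i) (e i) < 0 := (hBq (e i)).symm ▸ hneg i hi
  obtain ⟨z, hz⟩ := exists_intCast_pos_gramDet_neg
    (LinearMap.BilinForm.exists_pos_gramDet_neg ⟨hBsymm⟩ hq₁ hq₂.ne' hqe)
  simp only [LinearMap.BilinForm.gramDet, hBq] at hz
  exact ⟨z, fun hz0 => hz.1.ne' (by simp [hz0, ← Pi.zero_def]), hz⟩

/-- Case 3 of the proof of Theorem 1.1, stated for the lattice `ℤⁿ`: for a
quadratic form of signature `(3, n - 3)` positive definite on the span of the
integral classes `h1, h2`, there is a nonzero integral class `h3` with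
`q(h3) > 0` and negative Gram determinants with `h1` and `h2`. -/
theorem stmt9 {n : ℕ} (hn : 4 ≤ n)
    (q : QuadraticForm ℝ (Fin n → ℝ)) (B : LinearMap.BilinForm ℝ (Fin n → ℝ))
    (hBsymm : ∀ x y, B x y = B y x) (hBq : ∀ x, B x x = q x)
    (e : Module.Basis (Fin n) ℝ (Fin n → ℝ))
    (horth : ∀ i j : Fin n, i ≠ j → B (e i) (e j) = 0)
    (S : Finset (Fin n)) (hScard : S.card = 3)
    (hpos : ∀ i ∈ S, 0 < q (e i)) (hneg : ∀ i ∉ S, q (e i) < 0)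
    (h1 h2 : Fin n → ℤ) (hh1 : h1 ≠ 0) (hh2 : h2 ≠ 0)
    (hposdef : ∀ w ∈ Submodule.span ℝ
      ({fun i => (h1 i : ℝ), fun i => (h2 i : ℝ)} : Set (Fin n → ℝ)),
      w ≠ 0 → 0 < q w) :
    ∃ h3 : Fin n → ℤ, h3 ≠ 0 ∧ 0 < q (fun i => (h3 i : ℝ)) ∧
      q (fun i => (h1 i : ℝ)) * q (fun i => (h3 i : ℝ)) -
        (B (fun i => (h1 i : ℝ)) (fun i => (h3 i : ℝ))) ^ 2 < 0 ∧
      q (fun i => (h2 i : ℝ)) * q (fun i => (h3 i : ℝ)) -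
        (B (fun i => (h2 i : ℝ)) (fun i => (h3 i : ℝ))) ^ 2 < 0 :=
  stmt9_general hn q B hBsymm hBq e S hScard hneg h1 h2 hh1 hh2 hposdef
end

section
/- Let q be a quadratic form on ℝⁿ (the space Fin n → ℝ) of signature (3, n − 3), i.e., there is a basis e : Fin n → ℝⁿ with B(e i, e j) = 0 for i ≠ j, q(e i) > 0 for exactly three indices i and q(e i) < 0 for the remaining indices, where B is the symmetric bilinear form associated with q (B(x, x) = q(x)). Let h1, h2 ∈ ℤⁿ be integral vectors with q(h1) > 0 and q(h2) > 0. Then there exists a nonzero integral vector h3 ∈ ℤⁿ with q(h3) > 0, q(h1)·q(h3) − B(h1, h3)² ≠ 0, and q(h2)·q(h3) − B(h2, h3)² ≠ 0. -/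
/-!
Inside the positive definite 3-space spanned by the basis vectors of positive square there is a
vector `u₀ ≠ 0` orthogonal to both `h1` and `h2`; then `q u₀ > 0` and both Gram determinants equal
`q(hᵢ) q(u₀) > 0`. The conditions on `h3` define an open cone containing `u₀`, and a nonempty open
cone in `ℝⁿ` contains a rational point, hence, after clearing denominators, an integral one.
-/

open LinearMap (BilinForm)

namespace LinearMap.BilinForm

variable {ι E : Type*} [AddCommGroup E] [Module ℝ E]

theorem apply_sum_smul_self_of_iIsOrtho [Fintype ι] (B : BilinForm ℝ E) {e : ι → E}
    (horth : B.iIsOrtho e) (c : ι → ℝ) :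
    B (∑ i, c i • e i) (∑ i, c i • e i) = ∑ i, c i ^ 2 * B (e i) (e i) := by
  classical
  simp only [map_sum, map_smul, LinearMap.sum_apply, LinearMap.smul_apply, smul_eq_mul]
  refine Finset.sum_congr rfl fun i _ => ?_
  rw [Finset.sum_eq_single i (fun j _ hji => by rw [horth hji, mul_zero]) (by simp)]
  ring

theorem exists_apply_self_pos_of_two_lt_card (B : BilinForm ℝ E) {e : ι → E}
    (horth : B.iIsOrtho e) {s : Finset ι} (hs : 2 < s.card)
    (hpos : ∀ i ∈ s, 0 < B (e i) (e i)) (v w : E) :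
    ∃ u, 0 < B u u ∧ B v u = 0 ∧ B w u = 0 := by
  let L := Fintype.linearCombination ℝ fun i : s => e i
  let F := ((B v).comp L).prod ((B w).comp L)
  have hker : LinearMap.ker F ≠ ⊥ := LinearMap.ker_ne_bot_of_finrank_lt <| by
    simpa [Module.finrank_prod] using hs
  obtain ⟨c, hcF, hc⟩ := (Submodule.ne_bot_iff _).mp hker
  obtain ⟨i₀, hi₀⟩ := Function.ne_iff.mp hc
  refine ⟨L c, ?_, congrArg Prod.fst hcF, congrArg Prod.snd hcF⟩
  rw [Fintype.linearCombination_apply,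
    apply_sum_smul_self_of_iIsOrtho B (horth.comp_of_injective Subtype.val_injective)]
  exact Finset.sum_pos' (fun i _ => mul_nonneg (sq_nonneg _) (hpos i i.2).le)
    ⟨i₀, Finset.mem_univ _, mul_pos (sq_pos_of_ne_zero hi₀) (hpos i₀ i₀.2)⟩

end LinearMap.BilinForm

theorem Rat.exists_nat_mul_eq_intCast {ι : Type*} [Fintype ι] (r : ι → ℚ) :
    ∃ N : ℕ, 0 < N ∧ ∀ i, ∃ z : ℤ, (N : ℚ) * r i = z := by
  refine ⟨∏ i, (r i).den, Finset.prod_pos fun i _ => (r i).den_pos, fun i => ?_⟩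
  obtain ⟨k, hk⟩ := Finset.dvd_prod_of_mem (fun j => (r j).den) (Finset.mem_univ i)
  refine ⟨k * (r i).num, ?_⟩
  rw [hk, Int.cast_mul, ← Rat.mul_den_eq_num]
  push_cast
  ring

theorem exists_intCast_mem_of_isOpen {ι : Type*} [Fintype ι] {U : Set (ι → ℝ)}
    (hU : IsOpen U) (hne : U.Nonempty) (hsmul : ∀ t : ℝ, 0 < t → ∀ u ∈ U, t • u ∈ U) :
    ∃ z : ι → ℤ, (fun i => (z i : ℝ)) ∈ U := by
  obtain ⟨r, hrU⟩ :=
    (DenseRange.piMap fun _ => Rat.denseRange_cast (𝕜 := ℝ)).exists_mem_open hU hne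
  obtain ⟨N, hN, hz⟩ := Rat.exists_nat_mul_eq_intCast r
  choose z hz using hz
  refine ⟨z, ?_⟩
  convert hsmul N (by exact_mod_cast hN) _ hrU using 1
  ext i
  simpa using congrArg (Rat.cast : ℚ → ℝ) (hz i).symm

theorem QuadraticForm.continuous_of_finiteDimensional {E : Type*} [NormedAddCommGroup E]
    [NormedSpace ℝ E] [FiniteDimensional ℝ E] (q : QuadraticForm ℝ E) : Continuous q := by
  let F : E →ₗ[ℝ] E →L[ℝ] ℝ :=
    LinearMap.toContinuousLinearMap.toLinearMap ∘ₗ QuadraticMap.associated q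
  convert F.continuous_of_finiteDimensional.clm_apply continuous_id with x
  exact (QuadraticMap.associated_eq_self_apply ℝ q x).symm

section Gram

variable {E : Type*} [AddCommGroup E] [Module ℝ E]

def gramDet (q : QuadraticForm ℝ E) (B : BilinForm ℝ E) (v u : E) : ℝ :=
  q v * q u - B v u ^ 2

theorem gramDet_smul_right (q : QuadraticForm ℝ E) (B : BilinForm ℝ E) (v u : E) (t : ℝ) :
    gramDet q B v (t • u) = t ^ 2 * gramDet q B v u := by
  simp only [gramDet, QuadraticMap.map_smul, map_smul, smul_eq_mul]
  ring

theorem gramDet_pos_of_apply_eq_zero {q : QuadraticForm ℝ E} {B : BilinForm ℝ E} {v u : E}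
    (hv : 0 < q v) (hu : 0 < q u) (hvu : B v u = 0) : 0 < gramDet q B v u := by
  simpa [gramDet, hvu] using mul_pos hv hu

end Gram

theorem continuous_gramDet {E : Type*} [NormedAddCommGroup E] [NormedSpace ℝ E]
    [FiniteDimensional ℝ E] (q : QuadraticForm ℝ E) (B : BilinForm ℝ E) (v : E) :
    Continuous (gramDet q B v) :=
  (continuous_const.mul q.continuous_of_finiteDimensional).sub
    ((B v).continuous_of_finiteDimensional.pow 2)

theorem stmt10_general {n : ℕ}
    (q : QuadraticForm ℝ (Fin n → ℝ)) (B : LinearMap.BilinForm ℝ (Fin n → ℝ))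
    (hBq : ∀ x, B x x = q x)
    (e : Module.Basis (Fin n) ℝ (Fin n → ℝ))
    (horth : ∀ i j : Fin n, i ≠ j → B (e i) (e j) = 0)
    (S : Finset (Fin n)) (hScard : S.card = 3)
    (hpos : ∀ i ∈ S, 0 < q (e i))
    (h1 h2 : Fin n → ℤ)
    (hq1 : 0 < q (fun i => (h1 i : ℝ))) (hq2 : 0 < q (fun i => (h2 i : ℝ))) :
    ∃ h3 : Fin n → ℤ, h3 ≠ 0 ∧ 0 < q (fun i => (h3 i : ℝ)) ∧
      q (fun i => (h1 i : ℝ)) * q (fun i => (h3 i : ℝ)) -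
        (B (fun i => (h1 i : ℝ)) (fun i => (h3 i : ℝ))) ^ 2 ≠ 0 ∧
      q (fun i => (h2 i : ℝ)) * q (fun i => (h3 i : ℝ)) -
        (B (fun i => (h2 i : ℝ)) (fun i => (h3 i : ℝ))) ^ 2 ≠ 0 := by
  set v₁ : Fin n → ℝ := fun i => (h1 i : ℝ)
  set v₂ : Fin n → ℝ := fun i => (h2 i : ℝ)
  obtain ⟨u₀, hu₀, hv₁u₀, hv₂u₀⟩ := B.exists_apply_self_pos_of_two_lt_card horth
    (by omega : 2 < S.card) (fun i hi => (hBq _).symm ▸ hpos i hi) v₁ v₂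
  rw [hBq] at hu₀
  let U := {u | 0 < q u ∧ gramDet q B v₁ u ≠ 0 ∧ gramDet q B v₂ u ≠ 0}
  have hU : IsOpen U :=
    (isOpen_lt continuous_const q.continuous_of_finiteDimensional).inter
      ((isOpen_ne_fun (continuous_gramDet q B v₁) continuous_const).inter
        (isOpen_ne_fun (continuous_gramDet q B v₂) continuous_const))
  have hu₀U : u₀ ∈ U := ⟨hu₀, (gramDet_pos_of_apply_eq_zero hq1 hu₀ hv₁u₀).ne',
    (gramDet_pos_of_apply_eq_zero hq2 hu₀ hv₂u₀).ne'⟩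
  have hsmul : ∀ t : ℝ, 0 < t → ∀ u ∈ U, t • u ∈ U := fun t ht u ⟨hqu, hG₁, hG₂⟩ =>
    ⟨by rw [QuadraticMap.map_smul, smul_eq_mul]; positivity,
      by rw [gramDet_smul_right]; exact mul_ne_zero (by positivity) hG₁,
      by rw [gramDet_smul_right]; exact mul_ne_zero (by positivity) hG₂⟩
  obtain ⟨z, hzq, hz₁, hz₂⟩ := exists_intCast_mem_of_isOpen hU ⟨u₀, hu₀U⟩ hsmul
  refine ⟨z, ?_, hzq, hz₁, hz₂⟩
  rintro rfl
  simp [← Pi.zero_def] at hzq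

/-- Case 4 of the proof of Theorem 1.1, stated for the lattice `ℤⁿ`: for a
quadratic form of signature `(3, n - 3)` and integral classes `h1, h2` of
positive square, there is a nonzero integral class `h3` with `q(h3) > 0` and
nonvanishing Gram determinants with `h1` and `h2`. -/
theorem stmt10 {n : ℕ}
    (q : QuadraticForm ℝ (Fin n → ℝ)) (B : LinearMap.BilinForm ℝ (Fin n → ℝ))
    (hBsymm : ∀ x y, B x y = B y x) (hBq : ∀ x, B x x = q x)
    (e : Module.Basis (Fin n) ℝ (Fin n → ℝ))
    (horth : ∀ i j : Fin n, i ≠ j → B (e i) (e j) = 0)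
    (S : Finset (Fin n)) (hScard : S.card = 3)
    (hpos : ∀ i ∈ S, 0 < q (e i)) (hneg : ∀ i ∉ S, q (e i) < 0)
    (h1 h2 : Fin n → ℤ)
    (hq1 : 0 < q (fun i => (h1 i : ℝ))) (hq2 : 0 < q (fun i => (h2 i : ℝ))) :
    ∃ h3 : Fin n → ℤ, h3 ≠ 0 ∧ 0 < q (fun i => (h3 i : ℝ)) ∧
      q (fun i => (h1 i : ℝ)) * q (fun i => (h3 i : ℝ)) -
        (B (fun i => (h1 i : ℝ)) (fun i => (h3 i : ℝ))) ^ 2 ≠ 0 ∧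
      q (fun i => (h2 i : ℝ)) * q (fun i => (h3 i : ℝ)) -
        (B (fun i => (h2 i : ℝ)) (fun i => (h3 i : ℝ))) ^ 2 ≠ 0 :=
  stmt10_general q B hBq e horth S hScard hpos h1 h2 hq1 hq2
end
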